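/- Let $(S_n)_{n \in \mathbb{N}}$ be any sequence of operators such that for each $n$, $S_n$ is a self-adjoint extension of $J_n$ on $\ell^2(\mathbb{N};\mathbb{C})$. Define the operator $S$ on $\ell^2(\mathbb{N}\times\mathbb{N};\mathbb{C})$ with domain $D(S) = \{ f \in D(T^*) : \text{for every } n, \; P_n f \in D(S_n) \}$ (where $(P_n f)(m) := f(m,n)$) and $S f = T^* f$. Then $S$ is a self-adjoint extension of $T$. -/

import Mathlib

/-!
Summation by parts shows that `T` is symmetric and that `T*` and every `Jₙ*` act by the formal
Jacobi expressions; as `Sₙ = Sₙ* ≤ Jₙ*`, the operator `S ≤ T*` acts in the `n`-th row as `Sₙ`.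
Splitting inner products into rows then makes `S` symmetric. Conversely `S* ≤ T*` because
`T ≤ S`, and for `g ∈ D(S*)` each row `Pₙ g` lies in `D(Sₙ*) = D(Sₙ)`: test it against
`u ∈ D(Sₙ)` placed in the `n`-th row, which lies in `D(S)` since its rows are `u` and `0`.
-/

noncomputable section

/-- The Hilbert space `ℓ²(ℕ; ℂ)`. -/
abbrev H1 : Type := lp (fun _ : ℕ => ℂ) 2

/-- The Hilbert space `ℓ²(ℕ×ℕ; ℂ)`. -/
abbrev H2 : Type := lp (fun _ : ℕ × ℕ => ℂ) 2

/-- `β(m,n) = (1/2)·√(m+1)·(1-m-n)`. -/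
def beta (m n : ℕ) : ℝ := (1 / 2) * Real.sqrt ((m : ℝ) + 1) * (1 - (m : ℝ) - (n : ℝ))

/-- The formal Jacobi-type action on doubly indexed sequences, with `β(-1,n) = 0`. -/
def jacobiAct (g : ℕ × ℕ → ℂ) : ℕ × ℕ → ℂ := fun p =>
  (beta p.1 p.2 : ℂ) * g (p.1 + 1, p.2) +
    (if p.1 = 0 then 0 else (beta (p.1 - 1) p.2 : ℂ) * g (p.1 - 1, p.2))

/-- The formal Jacobi action in the row `n`, with `β(-1,n) = 0`. -/
def jacobiActRow (n : ℕ) (u : ℕ → ℂ) : ℕ → ℂ := fun m =>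
  (beta m n : ℂ) * u (m + 1) +
    (if m = 0 then 0 else (beta (m - 1) n : ℂ) * u (m - 1))

open scoped ComplexConjugate InnerProductSpace LinearPMap lp
open Function

namespace LinearPMap

theorem le_of_domain_le {R E F : Type*} [Ring R] [AddCommGroup E] [Module R E]
    [AddCommGroup F] [Module R F] {A B C : E →ₗ.[R] F} (hA : A ≤ C) (hB : B ≤ C)
    (h : A.domain ≤ B.domain) : A ≤ B :=
  ⟨h, fun _ y hxy => (hA.2 (y := ⟨y, hB.1 y.2⟩) hxy).trans (hB.2 rfl).symm⟩

variable {𝕜 E F : Type*} [RCLike 𝕜] [NormedAddCommGroup E] [InnerProductSpace 𝕜 E]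
  [NormedAddCommGroup F] [InnerProductSpace 𝕜 F] [CompleteSpace E]

theorem adjoint_le_adjoint {A B : E →ₗ.[𝕜] F} (hA : Dense (A.domain : Set E)) (hAB : A ≤ B) :
    B† ≤ A† := by
  refine IsFormalAdjoint.le_adjoint hA fun x y => ?_
  obtain ⟨x', hx', hAx⟩ := exists_of_le hAB x
  rw [hAx, hx']
  exact (adjoint_isFormalAdjoint (hA.mono hAB.1)).symm x' y

theorem _root_.IsSelfAdjoint.isFormalAdjoint {A : E →ₗ.[𝕜] E} (hA : IsSelfAdjoint A) :
    A.IsFormalAdjoint A := by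
  simpa only [isSelfAdjoint_def.1 hA] using adjoint_isFormalAdjoint hA.dense_domain (T := A)

end LinearPMap

theorem Memℓp.comp_injective {α β E : Type*} [NormedAddCommGroup E] {f : α → E}
    (hf : Memℓp f 2) {e : β → α} (he : Injective e) : Memℓp (f ∘ e) 2 :=
  memℓp_gen (((memℓp_gen_iff (by norm_num)).1 hf).comp_injective he)

namespace lp

variable {α : Type*}

theorem hasFiniteSupport_single {E : Type*} [NormedAddCommGroup E] {p : ENNReal}
    [DecidableEq α] (i : α) (a : E) :
    (⇑(lp.single p i a : lp (fun _ : α => E) p)).HasFiniteSupport :=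
  (Set.finite_singleton i).subset fun _ hj =>
    by_contra fun hji => hj (lp.single_apply_ne (E := fun _ => E) p i a hji)

theorem dense_hasFiniteSupport {E : Type*} [NormedAddCommGroup E] {p : ENNReal} [Fact (1 ≤ p)]
    (hp : p ≠ ⊤) : Dense {f : lp (fun _ : α => E) p | (⇑f).HasFiniteSupport} := by
  classical
  intro f
  refine mem_closure_of_tendsto (lp.hasSum_single hp f) (.of_forall fun s => ?_)
  rw [Set.mem_ofPred_eq, lp.coeFn_sum, Finset.sum_fn]
  exact HasFiniteSupport.sum (fun i => hasFiniteSupport_single i (f i)) s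

theorem inner_eq_tsum_conj_mul {𝕜 : Type*} [RCLike 𝕜] (f g : ℓ²(α, 𝕜)) :
    ⟪f, g⟫_𝕜 = ∑' i, conj (f i) * g i := by
  simp only [inner_eq_tsum, RCLike.inner_apply']

end lp

section FinsuppOperator

variable {α : Type*}

def IsFormallySymmetric (act : (α → ℂ) → α → ℂ) : Prop :=
  ∀ f g : α → ℂ, g.HasFiniteSupport →
    (∑' p, conj (act f p) * g p) = ∑' p, conj (f p) * act g p

structure IsFinsuppOperator (A : ℓ²(α, ℂ) →ₗ.[ℂ] ℓ²(α, ℂ)) (act : (α → ℂ) → α → ℂ) :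
    Prop where
  mem_domain_iff : ∀ f : ℓ²(α, ℂ), f ∈ A.domain ↔ (⇑f).HasFiniteSupport
  apply : ∀ (f : A.domain) (p : α), (A f : ℓ²(α, ℂ)) p = act f p

namespace IsFinsuppOperator

variable {A : ℓ²(α, ℂ) →ₗ.[ℂ] ℓ²(α, ℂ)} {act : (α → ℂ) → α → ℂ}

theorem dense_domain (hA : IsFinsuppOperator A act) : Dense (A.domain : Set ℓ²(α, ℂ)) :=
  (lp.dense_hasFiniteSupport (E := ℂ) (p := 2) (by norm_num)).mono fun f hf =>
    (hA.mem_domain_iff f).2 hf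

theorem inner_apply (hA : IsFinsuppOperator A act) (hact : IsFormallySymmetric act)
    (y : ℓ²(α, ℂ)) (x : A.domain) :
    ⟪y, A x⟫_ℂ = ∑' p, conj (act y p) * (x : ℓ²(α, ℂ)) p := by
  rw [lp.inner_eq_tsum_conj_mul, hact _ _ ((hA.mem_domain_iff x).1 x.2)]
  simp only [hA.apply]

theorem le_adjoint (hA : IsFinsuppOperator A act) (hact : IsFormallySymmetric act) : A ≤ A† :=
  LinearPMap.IsFormalAdjoint.le_adjoint hA.dense_domain fun x y => by
    rw [hA.inner_apply hact, lp.inner_eq_tsum_conj_mul]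
    simp only [hA.apply]

theorem mem_adjoint_domain_of_memℓp (hA : IsFinsuppOperator A act)
    (hact : IsFormallySymmetric act) (y : ℓ²(α, ℂ)) (h : Memℓp (act y) 2) : y ∈ A†.domain :=
  LinearPMap.mem_adjoint_domain_of_exists _ ⟨(⟨act y, h⟩ : ℓ²(α, ℂ)), fun x => by
    rw [hA.inner_apply hact, lp.inner_eq_tsum_conj_mul]⟩

theorem adjoint_apply (hA : IsFinsuppOperator A act) (hact : IsFormallySymmetric act)
    (y : A†.domain) (p : α) : (A† y : ℓ²(α, ℂ)) p = act y p := by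
  classical
  have he : lp.single 2 p (1 : ℂ) ∈ A.domain :=
    (hA.mem_domain_iff _).2 (lp.hasFiniteSupport_single p (1 : ℂ))
  have h := LinearPMap.adjoint_isFormalAdjoint hA.dense_domain y ⟨_, he⟩
  rw [hA.inner_apply hact,
    tsum_eq_single p fun q hq => by rw [lp.single_apply_ne 2 p _ hq, mul_zero]] at h
  simp only [lp.inner_single_right, lp.single_apply_self, RCLike.inner_apply', mul_one] at h
  exact star_injective h

theorem apply_of_le_adjoint (hA : IsFinsuppOperator A act) (hact : IsFormallySymmetric act)
    {B : ℓ²(α, ℂ) →ₗ.[ℂ] ℓ²(α, ℂ)} (hB : B ≤ A†) (x : B.domain) (p : α) :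
    (B x : ℓ²(α, ℂ)) p = act x p := by
  obtain ⟨y, hxy, hBy⟩ := LinearPMap.exists_of_le hB x
  rw [hBy, hA.adjoint_apply hact, hxy]

end IsFinsuppOperator

end FinsuppOperator

theorem HasSum.shift_fst {ι M : Type*} [AddCommMonoid M] [TopologicalSpace M] {R : ℕ × ι → M}
    {a : M} (h : HasSum R a) :
    HasSum (fun p : ℕ × ι => if p.1 = 0 then 0 else R (p.1 - 1, p.2)) a := by
  refine (((add_left_injective 1).prodMap injective_id).hasSum_iff fun p hp => if_pos ?_).1
    (by simpa [comp_def] using h)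
  by_contra h0
  exact hp ⟨(p.1 - 1, p.2), Prod.ext (Nat.sub_add_cancel (Nat.pos_of_ne_zero h0)) rfl⟩

theorem jacobiAct_isFormallySymmetric : IsFormallySymmetric jacobiAct := by
  intro f g hg
  -- The backward half of each side is the forward half of the other, shifted by one.
  set P : ℕ × ℕ → ℂ := fun p => beta p.1 p.2 * conj (f (p.1 + 1, p.2)) * g p
  set Q : ℕ × ℕ → ℂ := fun p => beta p.1 p.2 * conj (f p) * g (p.1 + 1, p.2)
  have hP : Summable P := summable_of_hasFiniteSupport (hg.fun_mul_right _)
  have hQ : Summable Q := summable_of_hasFiniteSupport <|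
    (hg.comp_of_injective ((add_left_injective 1).prodMap injective_id)).fun_mul_right _
  have hL := (hP.hasSum.add hQ.hasSum.shift_fst).tsum_eq
  have hR := (hQ.hasSum.add hP.hasSum.shift_fst).tsum_eq
  rw [add_comm] at hR
  convert hL.trans hR.symm using 3 with p p <;> rcases p with ⟨_ | m, n⟩ <;>
    simp [jacobiAct, P, Q] <;> ring

def embedRow {M : Type*} [Zero M] (n : ℕ) (u : ℕ → M) : ℕ × ℕ → M :=
  fun p => if p.2 = n then u p.1 else 0

section embedRow

variable {M : Type*} [Zero M] (n : ℕ)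

@[simp]
theorem embedRow_apply_self (u : ℕ → M) (m : ℕ) : embedRow n u (m, n) = u m := by
  simp [embedRow]

theorem embedRow_eq_zero_of_notMem_range (u : ℕ → M) (p : ℕ × ℕ)
    (hp : p ∉ Set.range (·, n)) : embedRow n u p = 0 :=
  if_neg fun h => hp ⟨p.1, Prod.ext rfl h.symm⟩

theorem Function.HasFiniteSupport.embedRow {u : ℕ → M} (hu : u.HasFiniteSupport) :
    (embedRow n u).HasFiniteSupport := by
  refine (hu.image (·, n)).subset ?_
  rintro ⟨m, k⟩ hp
  obtain rfl : k = n := by_contra fun hk => hp (if_neg hk)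
  exact ⟨m, by simpa using hp, rfl⟩

theorem Memℓp.embedRow {E : Type*} [NormedAddCommGroup E] {u : ℕ → E} (hu : Memℓp u 2) :
    Memℓp (embedRow n u) 2 := by
  refine memℓp_gen (((Prod.mk_left_injective n).summable_iff fun p hp => ?_).1 ?_)
  · simp [embedRow_eq_zero_of_notMem_range n u p hp]
  · simpa [comp_def] using (memℓp_gen_iff (by norm_num)).1 hu

theorem tsum_mul_embedRow (a : ℕ × ℕ → ℂ) (u : ℕ → ℂ) :
    ∑' p, a p * embedRow n u p = ∑' m, a (m, n) * u m := by
  refine ((Prod.mk_left_injective n).tsum_eq fun p hp => ?_).symm.trans (by simp)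
  by_contra h
  exact hp (by simp only [embedRow_eq_zero_of_notMem_range n u p h, mul_zero])

end embedRow

theorem jacobiAct_embedRow (n : ℕ) (u : ℕ → ℂ) :
    jacobiAct (embedRow n u) = embedRow n (jacobiActRow n u) := by
  funext ⟨m, k⟩
  by_cases hk : k = n
  · subst hk; simp [jacobiAct, jacobiActRow]
  · simp [jacobiAct, embedRow, hk]

theorem jacobiActRow_isFormallySymmetric (n : ℕ) : IsFormallySymmetric (jacobiActRow n) := by
  intro f g hg
  have h := jacobiAct_isFormallySymmetric (embedRow n f) (embedRow n g) (hg.embedRow n)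
  simpa only [jacobiAct_embedRow, tsum_mul_embedRow, embedRow_apply_self] using h

/-- The paper's `Pₙ f`. -/
def row (f : H2) (n : ℕ) : H1 :=
  ⟨fun m => f (m, n), (lp.memℓp f).comp_injective (Prod.mk_left_injective n)⟩

def rowEmbed (n : ℕ) (u : H1) : H2 := ⟨embedRow n u, (lp.memℓp u).embedRow n⟩

theorem inner_eq_tsum_inner_row (φ ψ : H2) : ⟪φ, ψ⟫_ℂ = ∑' n, ⟪row φ n, row ψ n⟫_ℂ := by
  have h : Summable fun p => conj (φ p) * ψ p := by
    simpa only [RCLike.inner_apply'] using lp.summable_inner (𝕜 := ℂ) φ ψ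
  calc ⟪φ, ψ⟫_ℂ = ∑' m, ∑' n, conj (φ (m, n)) * ψ (m, n) := by
        rw [lp.inner_eq_tsum_conj_mul, h.tsum_prod]
    _ = ∑' n, ∑' m, conj (φ (m, n)) * ψ (m, n) :=
        (Summable.tsum_comm (f := fun m n => conj (φ (m, n)) * ψ (m, n)) h).symm
    _ = ∑' n, ⟪row φ n, row ψ n⟫_ℂ := by simp only [lp.inner_eq_tsum_conj_mul]; rfl

theorem inner_rowEmbed (φ : H2) (n : ℕ) (u : H1) : ⟪φ, rowEmbed n u⟫_ℂ = ⟪row φ n, u⟫_ℂ := by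
  simp only [lp.inner_eq_tsum_conj_mul]
  exact tsum_mul_embedRow n _ u

theorem row_rowEmbed (n k : ℕ) (u : H1) : row (rowEmbed n u) k = if k = n then u else 0 := by
  ext m
  by_cases hk : k = n
  · subst hk; simp [row, rowEmbed]
  · simp [row, rowEmbed, embedRow, hk]

theorem row_apply_of_le_adjoint {T : H2 →ₗ.[ℂ] H2} (hT : IsFinsuppOperator T jacobiAct)
    {B : H2 →ₗ.[ℂ] H2} (hB : B ≤ T†) {n : ℕ} {J : H1 →ₗ.[ℂ] H1}
    (hJ : IsFinsuppOperator J (jacobiActRow n)) {C : H1 →ₗ.[ℂ] H1} (hC : C ≤ J†)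
    (x : B.domain) (y : C.domain) (hxy : row x n = y) : row (B x) n = C y := by
  ext m
  rw [hJ.apply_of_le_adjoint (jacobiActRow_isFormallySymmetric n) hC, ← hxy]
  exact hT.apply_of_le_adjoint jacobiAct_isFormallySymmetric hB x (m, n)

theorem isFormalAdjoint_of_rows {S : H2 →ₗ.[ℂ] H2} {SF : ℕ → (H1 →ₗ.[ℂ] H1)}
    (hSF : ∀ n, (SF n).IsFormalAdjoint (SF n))
    (hrow : ∀ (x : S.domain) (n : ℕ), ∃ y : (SF n).domain, row x n = y ∧ row (S x) n = SF n y) :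
    S.IsFormalAdjoint S := by
  choose u hu hSu using hrow
  intro x y
  rw [inner_eq_tsum_inner_row, inner_eq_tsum_inner_row]
  refine tsum_congr fun n => ?_
  rw [hu, hu, hSu, hSu]
  exact hSF n _ _

theorem row_mem_adjoint_domain {T S : H2 →ₗ.[ℂ] H2} (hT : IsFinsuppOperator T jacobiAct)
    (hST : S ≤ T†) (hS : Dense (S.domain : Set H2)) {SF : ℕ → (H1 →ₗ.[ℂ] H1)}
    (hSdom : ∀ f, f ∈ S.domain ↔ f ∈ T†.domain ∧ ∀ n, row f n ∈ (SF n).domain)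
    {n : ℕ} {J : H1 →ₗ.[ℂ] H1} (hJ : IsFinsuppOperator J (jacobiActRow n)) (hSFJ : SF n ≤ J†)
    (g : S†.domain) : row g n ∈ (SF n)†.domain := by
  refine LinearPMap.mem_adjoint_domain_of_exists _ ⟨row (S† g) n, fun u => ?_⟩
  have hSFu : ⇑(SF n u : H1) = jacobiActRow n u :=
    funext (hJ.apply_of_le_adjoint (jacobiActRow_isFormallySymmetric n) hSFJ u)
  have he : rowEmbed n u ∈ S.domain := by
    refine (hSdom _).2 ⟨hT.mem_adjoint_domain_of_memℓp jacobiAct_isFormallySymmetric _ ?_,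
      fun k => ?_⟩
    · rw [rowEmbed, jacobiAct_embedRow, ← hSFu]
      exact (lp.memℓp _).embedRow n
    · rw [row_rowEmbed]
      split_ifs with hk
      · exact hk ▸ u.2
      · exact zero_mem _
  have hSe : S ⟨_, he⟩ = rowEmbed n (SF n u) := by
    ext p
    rw [hT.apply_of_le_adjoint jacobiAct_isFormallySymmetric hST]
    exact congrFun ((jacobiAct_embedRow n u).trans (congrArg (embedRow n) hSFu.symm)) p
  calc ⟪row (S† g) n, u⟫_ℂ = ⟪S† g, rowEmbed n u⟫_ℂ := (inner_rowEmbed _ _ _).symm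
    _ = ⟪(g : H2), S ⟨_, he⟩⟫_ℂ := LinearPMap.adjoint_isFormalAdjoint hS g ⟨_, he⟩
    _ = ⟪row g n, SF n u⟫_ℂ := by rw [hSe, inner_rowEmbed]

/-- Given self-adjoint extensions `Sₙ` of the Jacobi operators `Jₙ`, the operator `S`
with domain `{f ∈ D(T*) : ∀ n, Pₙ f ∈ D(Sₙ)}` acting by `T*` is a self-adjoint
extension of the Calvo–Picón operator `T`. -/
theorem direct_sum_of_selfAdjoint_extensions_is_selfAdjoint_extension
    (T : H2 →ₗ.[ℂ] H2)
    (hTdom : ∀ f : H2, f ∈ T.domain ↔ {p : ℕ × ℕ | f p ≠ 0}.Finite)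
    (hTact : ∀ f : T.domain, ∀ p : ℕ × ℕ, (T f : H2) p = jacobiAct (⇑(f : H2)) p)
    (J : ℕ → (H1 →ₗ.[ℂ] H1))
    (hJdom : ∀ n : ℕ, ∀ u : H1, u ∈ (J n).domain ↔ {m : ℕ | u m ≠ 0}.Finite)
    (hJact : ∀ n : ℕ, ∀ u : (J n).domain, ∀ m : ℕ,
      ((J n) u : H1) m = jacobiActRow n (⇑(u : H1)) m)
    (SF : ℕ → (H1 →ₗ.[ℂ] H1))
    (hSF : ∀ n : ℕ, IsSelfAdjoint (SF n) ∧ J n ≤ SF n)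
    (S : H2 →ₗ.[ℂ] H2)
    (hSdom : ∀ f : H2, f ∈ S.domain ↔
      (f ∈ T.adjoint.domain ∧
        ∀ n : ℕ, ∃ hs : Memℓp (fun m : ℕ => f (m, n)) 2,
          (⟨fun m : ℕ => f (m, n), hs⟩ : H1) ∈ (SF n).domain))
    (hSact : ∀ (f : H2) (hf : f ∈ S.domain) (hf' : f ∈ T.adjoint.domain),
      S ⟨f, hf⟩ = T.adjoint ⟨f, hf'⟩) :
    IsSelfAdjoint S ∧ T ≤ S := by
  have hT : IsFinsuppOperator T jacobiAct := ⟨hTdom, hTact⟩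
  have hJ n : IsFinsuppOperator (J n) (jacobiActRow n) := ⟨hJdom n, hJact n⟩
  have hTT : T ≤ T† := hT.le_adjoint jacobiAct_isFormallySymmetric
  have hSFJ n : SF n ≤ (J n)† := LinearPMap.isSelfAdjoint_def.1 (hSF n).1 ▸
    LinearPMap.adjoint_le_adjoint (hJ n).dense_domain (hSF n).2
  have hSdom' f : f ∈ S.domain ↔ f ∈ T†.domain ∧ ∀ n, row f n ∈ (SF n).domain := by
    rw [hSdom]
    exact and_congr_right fun _ => forall_congr' fun n => ⟨fun ⟨_, h⟩ => h, fun h => ⟨_, h⟩⟩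
  have hST : S ≤ T† := ⟨fun f hf => ((hSdom f).1 hf).1,
    fun x _ hxy => (hSact x x.2 ((hSdom x).1 x.2).1).trans (congrArg _ (Subtype.ext hxy))⟩
  have hTS : T ≤ S := LinearPMap.le_of_domain_le hTT hST fun f hf =>
    (hSdom' f).2 ⟨hTT.1 hf, fun n => (hSF n).2.1 (((hJ n).mem_domain_iff _).2
      (((hT.mem_domain_iff f).1 hf).comp_of_injective (g := (·, n)) (Prod.mk_left_injective n)))⟩
  have hS : Dense (S.domain : Set H2) := hT.dense_domain.mono hTS.1
  have hSsymm : S.IsFormalAdjoint S :=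
    isFormalAdjoint_of_rows (fun n => (hSF n).1.isFormalAdjoint) fun x n =>
      ⟨⟨row x n, ((hSdom' x).1 x.2).2 n⟩, rfl,
        row_apply_of_le_adjoint hT hST (hJ n) (hSFJ n) _ _ rfl⟩
  have hSadj : S† ≤ T† := LinearPMap.adjoint_le_adjoint hT.dense_domain hTS
  have hSadjS : S† ≤ S := LinearPMap.le_of_domain_le hSadj hST fun g hg =>
    (hSdom' g).2 ⟨hSadj.1 hg, fun n => LinearPMap.isSelfAdjoint_def.1 (hSF n).1 ▸
      row_mem_adjoint_domain hT hST hS hSdom' (hJ n) (hSFJ n) ⟨g, hg⟩⟩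
  exact ⟨LinearPMap.isSelfAdjoint_def.2 (le_antisymm hSadjS (hSsymm.le_adjoint hS)), hTS⟩
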